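/- For all 0 < t < 1, one has 2ψ''(t)² − ψ'''(t)·ψ'(t) > 0, where ψ(t) = (1/2)(2t² + 1/t² − 5) + e^{1/t−1}. -/
import Mathlib


noncomputable def psi' (t : ℝ) : ℝ := 2*t - 1/t^3 - (1/t^2) * Real.exp (1/t - 1)

noncomputable def psi'' (t : ℝ) : ℝ :=
  2 + 3/t^4 + (2/t^3 + 1/t^4) * Real.exp (1/t - 1)

noncomputable def psi''' (t : ℝ) : ℝ :=
  -12/t^5 - (6/t^5 + 1/t^6 + 6/t^4) * Real.exp (1/t - 1)

theorem stmt_7 : ∀ t : ℝ, 0 < t → t < 1 →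
    2 * (psi'' t)^2 - psi''' t * psi' t > 0 := by
  intro t ht0 ht1
  have ht : t ≠ 0 := ne_of_gt ht0
  set E : ℝ := Real.exp (1/t - 1) with hEdef
  have hEpos : 0 < E := Real.exp_pos _
  have h1 : 1 ≤ t * E := by
    have h := Real.add_one_le_exp (1/t - 1)
    have : 1/t ≤ E := by linarith
    calc 1 = t * (1/t) := by field_simp
    _ ≤ t * E := by nlinarith
  have key : 2 * (psi'' t)^2 - psi''' t * psi' t =
      ((2*t^4+2*t^3+t^2)*E^2 + (28*t^7+20*t^6+2*t^5+6*t^3+6*t^2-t)*E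
        + (8*t^10+48*t^6+6*t^2)) / t^10 := by
    unfold psi' psi'' psi'''
    rw [← hEdef]
    field_simp
    ring
  rw [key]
  apply div_pos _ (by positivity)
  nlinarith [sq_nonneg (t*E), mul_pos ht0 hEpos, sq_nonneg t, mul_pos (mul_pos ht0 ht0) hEpos, pow_pos ht0 3, pow_pos ht0 5, pow_pos ht0 7]
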